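/- Let L/K be a field extension of finite degree and let M ∈ M_n(K) be a cyclic matrix with minimal polynomial f = f₁^{m₁}⋯f_s^{m_s} (f_i pairwise distinct monic irreducible over K). Let g ∈ L[x] be a monic divisor of f, written g = g₁⋯g_s with g_i | f_i^{m_i}, and define ℓ_i = 0 if g_i = 1 and ℓ_i = min{ℓ : g_i | f_i^ℓ} otherwise. Then dim_K(C_g ∩ K^n) = Σ_{i=1}^s (m_i − ℓ_i) deg(f_i), where C_g is the M-cyclic code with generator polynomial g. -/

import Mathlib

/-!
For a cyclic vector `v`, the map `P ↦ P(M) v` identifies `K[X]/(f)` with `K^n`, and `v` stays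
cyclic for `M` over `L`, so that `f` is also the minimal polynomial of `M` over `L`. Hence a vector
`R(M) v` of `K^n` lies in `C_g` iff `g ∣ R` in `L[X]`. Comparing primary parts, which are coprime,
this happens iff `h = ∏ fᵢ^ℓᵢ ∣ R` in `K[X]`; so `C_g ∩ K^n` is the `K`-cyclic code generated by
`h`, which is isomorphic to `K[X]/(f / h)` and has dimension `deg (f / h)`.
-/

open Polynomial Matrix

lemma LinearMap.compLeft_injective {R M₂ M₃ : Type*} [Semiring R] [AddCommMonoid M₂]
    [AddCommMonoid M₃] [Module R M₂] [Module R M₃] {f : M₂ →ₗ[R] M₃}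
    (hf : Function.Injective f) (I : Type*) : Function.Injective (f.compLeft I) :=
  fun _ _ h => funext fun j => hf (congrFun h j)

namespace CyclicCode

section Eval

variable {F : Type*} [Field F] {n : ℕ}

noncomputable def aevalMulVec (M : Matrix (Fin n) (Fin n) F) (v : Fin n → F) :
    F[X] →ₗ[F] (Fin n → F) where
  toFun P := aeval M P *ᵥ v
  map_add' P Q := by simp [Matrix.add_mulVec]
  map_smul' c P := by simp [Matrix.smul_mulVec]

variable (M : Matrix (Fin n) (Fin n) F) (v : Fin n → F)

lemma aevalMulVec_apply (P : F[X]) : aevalMulVec M v P = aeval M P *ᵥ v := rfl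

lemma aevalMulVec_mul (P Q : F[X]) :
    aevalMulVec M v (P * Q) = aeval M P *ᵥ aevalMulVec M v Q := by
  simp [aevalMulVec_apply, Matrix.mulVec_mulVec]

variable {M v}

lemma aevalMulVec_surjective
    (hv : Submodule.span F (Set.range fun i : Fin n => (M ^ (i : ℕ)) *ᵥ v) = ⊤) :
    Function.Surjective (aevalMulVec M v) := by
  rw [← LinearMap.range_eq_top, eq_top_iff, ← hv, Submodule.span_le]
  rintro _ ⟨i, rfl⟩
  exact ⟨X ^ (i : ℕ), by simp [aevalMulVec_apply]⟩

/-- `P(M)` commutes with `M`, so `P(M) v = 0` forces `P(M)` to vanish on the `M`-span of `v`. -/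
lemma aevalMulVec_eq_zero_iff
    (hv : Submodule.span F (Set.range fun i : Fin n => (M ^ (i : ℕ)) *ᵥ v) = ⊤) (P : F[X]) :
    aevalMulVec M v P = 0 ↔ minpoly F M ∣ P := by
  refine ⟨fun hP => minpoly.dvd F M ?_, fun ⟨Q, hQ⟩ => ?_⟩
  · suffices Matrix.toLin' (aeval M P) = 0 from Matrix.toLin'.map_eq_zero_iff.mp this
    refine LinearMap.ext_on_range hv fun i => ?_
    rw [Matrix.toLin'_apply, LinearMap.zero_apply]
    calc aeval M P *ᵥ (M ^ (i : ℕ) *ᵥ v) = aevalMulVec M v (P * X ^ (i : ℕ)) := by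
          simp [aevalMulVec_apply, Matrix.mulVec_mulVec]
      _ = M ^ (i : ℕ) *ᵥ aevalMulVec M v P := by rw [mul_comm, aevalMulVec_mul, map_pow, aeval_X]
      _ = 0 := by rw [hP, Matrix.mulVec_zero]
  · rw [hQ, aevalMulVec_mul, minpoly.aeval, Matrix.zero_mulVec]

end Eval

lemma finrank_range_eq_natDegree {F V : Type*} [Field F] [AddCommGroup V] [Module F V]
    (ψ : F[X] →ₗ[F] V) {p : F[X]} (hp : p.Monic) (hker : ∀ Q, ψ Q = 0 ↔ p ∣ Q) :
    Module.finrank F (LinearMap.range ψ) = p.natDegree := by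
  set ψd := ψ ∘ₗ (degreeLT F p.natDegree).subtype
  have hmod : ∀ Q, ψ (Q %ₘ p) = ψ Q := fun Q => by
    rw [← sub_eq_zero, ← map_sub, hker, modByMonic_eq_sub_mul_div Q p, sub_sub_cancel_left,
      dvd_neg]
    exact dvd_mul_right _ _
  have hrange : LinearMap.range ψd = LinearMap.range ψ := by
    refine le_antisymm (LinearMap.range_comp_le_range _ _) ?_
    rintro _ ⟨Q, rfl⟩
    refine ⟨⟨Q %ₘ p, mem_degreeLT.mpr ?_⟩, hmod Q⟩
    rw [← degree_eq_natDegree hp.ne_zero]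
    exact degree_modByMonic_lt Q hp
  have hinj : Function.Injective ψd := by
    refine (injective_iff_map_eq_zero ψd).mpr fun ⟨Q, hQ⟩ h0 => Subtype.ext ?_
    refine eq_zero_of_dvd_of_degree_lt ((hker Q).mp h0) ?_
    rw [degree_eq_natDegree hp.ne_zero]
    exact mem_degreeLT.mp hQ
  rw [← hrange, LinearMap.finrank_range_of_inj hinj,
    (degreeLTEquiv F p.natDegree).finrank_eq, Module.finrank_fin_fun]

section Code

variable {F : Type*} [Field F] {n : ℕ}

noncomputable def cyclicCode (M : Matrix (Fin n) (Fin n) F) (v : Fin n → F) (g : F[X]) :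
    Submodule F (Fin n → F) :=
  LinearMap.range (aevalMulVec M v ∘ₗ LinearMap.mulLeft F g)

variable {M : Matrix (Fin n) (Fin n) F} {v : Fin n → F}

lemma mem_cyclicCode {g : F[X]} {c : Fin n → F} :
    c ∈ cyclicCode M v g ↔ ∃ P : F[X], c = aeval M (g * P) *ᵥ v := by
  simp [cyclicCode, aevalMulVec_apply, eq_comm]

lemma finrank_cyclicCode
    (hv : Submodule.span F (Set.range fun i : Fin n => (M ^ (i : ℕ)) *ᵥ v) = ⊤)
    {g q : F[X]} (hgq : minpoly F M = g * q) (hq : q.Monic) :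
    Module.finrank F (cyclicCode M v g) = q.natDegree := by
  have hg : g ≠ 0 := left_ne_zero_of_mul (hgq ▸ minpoly.ne_zero (Matrix.isIntegral M))
  refine finrank_range_eq_natDegree _ hq fun Q => ?_
  rw [LinearMap.comp_apply, LinearMap.mulLeft_apply, aevalMulVec_eq_zero_iff hv, hgq,
    mul_dvd_mul_iff_left hg]

lemma natDegree_minpoly_eq
    (hv : Submodule.span F (Set.range fun i : Fin n => (M ^ (i : ℕ)) *ᵥ v) = ⊤) :
    (minpoly F M).natDegree = n := by
  have htop : cyclicCode M v 1 = ⊤ := by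
    rw [cyclicCode, LinearMap.mulLeft_one, LinearMap.comp_id]
    exact LinearMap.range_eq_top.mpr (aevalMulVec_surjective hv)
  rw [← finrank_cyclicCode hv (one_mul _).symm (minpoly.monic (Matrix.isIntegral M)), htop,
    finrank_top, Module.finrank_fin_fun]

end Code

section BaseChange

variable {K L : Type*} [Field K] [Field L] [Algebra K L] {n : ℕ}

lemma span_range_compLeft_eq_top {σ η : Type*} [Finite σ] {w : η → σ → K}
    (hw : Submodule.span K (Set.range w) = ⊤) :
    Submodule.span L (Set.range fun i => (Algebra.linearMap K L).compLeft σ (w i)) = ⊤ := by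
  classical
  rw [eq_top_iff, ← (Pi.basisFun L σ).span_eq, Submodule.span_le]
  rintro _ ⟨j, rfl⟩
  have hj : Pi.basisFun L σ j = (Algebra.linearMap K L).compLeft σ (Pi.basisFun K σ j) := by
    ext k
    simp [Pi.single_apply, apply_ite (algebraMap K L)]
  have hmem : (Algebra.linearMap K L).compLeft σ (Pi.basisFun K σ j) ∈
      (Submodule.span K (Set.range w)).map ((Algebra.linearMap K L).compLeft σ) :=
    Submodule.mem_map_of_mem (hw ▸ Submodule.mem_top)
  rw [Submodule.map_span, ← Set.range_comp] at hmem
  exact hj ▸ Submodule.span_le_restrictScalars K L _ hmem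

variable {M : Matrix (Fin n) (Fin n) K} {v : Fin n → K}

lemma compLeft_pow_mulVec (i : ℕ) :
    (Algebra.linearMap K L).compLeft (Fin n) ((M ^ i) *ᵥ v) =
      (M.map (algebraMap K L) ^ i) *ᵥ (algebraMap K L ∘ v) := by
  ext j
  rw [← Matrix.map_pow]
  exact RingHom.map_mulVec (algebraMap K L) _ v j

lemma aeval_map_map_algebraMap (R : K[X]) :
    aeval (M.map (algebraMap K L)) (R.map (algebraMap K L)) =
      (aeval M R).map (algebraMap K L) := by
  rw [aeval_map_algebraMap]
  exact aeval_algHom_apply (AlgHom.mapMatrix (Algebra.ofId K L)) M R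

lemma compLeft_aevalMulVec (R : K[X]) :
    (Algebra.linearMap K L).compLeft (Fin n) (aevalMulVec M v R) =
      aevalMulVec (M.map (algebraMap K L)) (algebraMap K L ∘ v) (R.map (algebraMap K L)) := by
  ext j
  rw [aevalMulVec_apply, aevalMulVec_apply, aeval_map_map_algebraMap]
  exact RingHom.map_mulVec (algebraMap K L) _ v j

lemma span_range_pow_mulVec_map_eq_top
    (hv : Submodule.span K (Set.range fun i : Fin n => (M ^ (i : ℕ)) *ᵥ v) = ⊤) :
    Submodule.span L (Set.range fun i : Fin n =>
      (M.map (algebraMap K L) ^ (i : ℕ)) *ᵥ (algebraMap K L ∘ v)) = ⊤ := by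
  simpa only [compLeft_pow_mulVec] using span_range_compLeft_eq_top (L := L) hv

lemma minpoly_map_eq
    (hv : Submodule.span K (Set.range fun i : Fin n => (M ^ (i : ℕ)) *ᵥ v) = ⊤) :
    minpoly L (M.map (algebraMap K L)) = (minpoly K M).map (algebraMap K L) := by
  have hmonic := minpoly.monic (Matrix.isIntegral M)
  refine (eq_of_monic_of_dvd_of_natDegree_le (minpoly.monic (Matrix.isIntegral _))
    (hmonic.map _) (minpoly.dvd L _ ?_) ?_).symm
  · rw [aeval_map_map_algebraMap, minpoly.aeval, Matrix.map_zero _ (map_zero _)]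
  · rw [natDegree_map, natDegree_minpoly_eq hv,
      natDegree_minpoly_eq (span_range_pow_mulVec_map_eq_top hv)]

lemma restrictScalars_cyclicCode_map_inf_range_compLeft
    (hv : Submodule.span K (Set.range fun i : Fin n => (M ^ (i : ℕ)) *ᵥ v) = ⊤)
    {g : L[X]} {h : K[X]} (hg : g ∣ (minpoly K M).map (algebraMap K L))
    (hgh : g ∣ h.map (algebraMap K L)) (hhg : ∀ R : K[X], g ∣ R.map (algebraMap K L) → h ∣ R) :
    (cyclicCode (M.map (algebraMap K L)) (algebraMap K L ∘ v) g).restrictScalars K ⊓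
        LinearMap.range ((Algebra.linearMap K L).compLeft (Fin n)) =
      (cyclicCode M v h).map ((Algebra.linearMap K L).compLeft (Fin n)) := by
  have hvL := span_range_pow_mulVec_map_eq_top (L := L) hv
  ext x
  simp only [Submodule.mem_inf, Submodule.restrictScalars_mem, LinearMap.mem_range,
    Submodule.mem_map]
  constructor
  · rintro ⟨hx, y, rfl⟩
    obtain ⟨R, rfl⟩ := aevalMulVec_surjective hv y
    obtain ⟨P, hP⟩ := mem_cyclicCode.mp hx
    rw [compLeft_aevalMulVec, ← aevalMulVec_apply, ← sub_eq_zero, ← map_sub,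
      aevalMulVec_eq_zero_iff hvL, minpoly_map_eq hv] at hP
    obtain ⟨Q, rfl⟩ := hhg R ((dvd_sub_left (dvd_mul_right g P)).mp (hg.trans hP))
    exact ⟨_, ⟨Q, rfl⟩, rfl⟩
  · rintro ⟨_, ⟨Q, rfl⟩, rfl⟩
    refine ⟨mem_cyclicCode.mpr ?_, _, rfl⟩
    obtain ⟨w, hw⟩ := hgh
    refine ⟨w * Q.map (algebraMap K L), ?_⟩
    rw [LinearMap.comp_apply, LinearMap.mulLeft_apply, compLeft_aevalMulVec, Polynomial.map_mul,
      hw, mul_assoc, aevalMulVec_apply]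

end BaseChange

section Divisibility

variable {K L : Type*} [Field K] [Field L] [Algebra K L]

lemma isCoprime_of_irreducible_of_monic {p q : K[X]} (hp : Irreducible p) (hq : Irreducible q)
    (hpm : p.Monic) (hqm : q.Monic) (hpq : p ≠ q) : IsCoprime p q :=
  hp.coprime_iff_not_dvd.mpr fun hdvd =>
    hpq (eq_of_monic_of_associated hpm hqm (hp.associated_of_dvd hq hdvd))

/-- Write `R = p ^ e * S` with `p ∤ S`: then `q` is coprime to `S`, so `q ∣ p ^ e` and `ℓ ≤ e`. -/
lemma pow_dvd_of_dvd_map {p : K[X]} (hp : Irreducible p) {q : L[X]} (hq : ¬IsUnit q) {m ℓ : ℕ}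
    (hqm : q ∣ p.map (algebraMap K L) ^ m)
    (hℓ : ∀ l, 1 ≤ l → q ∣ p.map (algebraMap K L) ^ l → ℓ ≤ l)
    {R : K[X]} (hR : q ∣ R.map (algebraMap K L)) : p ^ ℓ ∣ R := by
  rcases eq_or_ne R 0 with rfl | hR0
  · exact dvd_zero _
  obtain ⟨e, S, hpS, rfl⟩ := WfDvdMonoid.max_power_factor hR0 hp
  have hcop : IsCoprime (p.map (algebraMap K L) ^ m) (S.map (algebraMap K L)) :=
    ((hp.coprime_iff_not_dvd.mpr hpS).map (mapRingHom (algebraMap K L))).pow_left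
  rw [Polynomial.map_mul, Polynomial.map_pow] at hR
  have hqe : q ∣ p.map (algebraMap K L) ^ e :=
    (hcop.of_isCoprime_of_dvd_left hqm).dvd_of_dvd_mul_right hR
  have he : 1 ≤ e := Nat.one_le_iff_ne_zero.mpr fun he0 =>
    hq (isUnit_of_dvd_one (by rwa [he0, pow_zero] at hqe))
  exact (pow_dvd_pow p (hℓ e he hqe)).mul_right S

end Divisibility

end CyclicCode

open CyclicCode in
theorem stmt7_general {K L : Type*} [Field K] [Field L] [Algebra K L]
    {n s : ℕ}
    (M : Matrix (Fin n) (Fin n) K) (v : Fin n → K)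
    (hv : Submodule.span K (Set.range fun i : Fin n => (M ^ (i : ℕ)).mulVec v) = ⊤)
    (f : Fin s → Polynomial K) (m : Fin s → ℕ)
    (hmonic : ∀ i, (f i).Monic) (hirr : ∀ i, Irreducible (f i))
    (hdist : Function.Injective f)
    (hmin : minpoly K M = ∏ i, f i ^ m i)
    (g : Polynomial L)
    (hgdvd : g ∣ (minpoly K M).map (algebraMap K L))
    (gi : Fin s → Polynomial L) (hgimonic : ∀ i, (gi i).Monic)
    (hgprod : g = ∏ i, gi i)
    (hgi : ∀ i, gi i ∣ ((f i).map (algebraMap K L)) ^ m i)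
    (ℓ : Fin s → ℕ)
    (hℓ0 : ∀ i, gi i = 1 → ℓ i = 0)
    (hℓ1 : ∀ i, gi i ≠ 1 →
      1 ≤ ℓ i ∧ ℓ i ≤ m i ∧ gi i ∣ ((f i).map (algebraMap K L)) ^ ℓ i ∧
      ∀ l, 1 ≤ l → gi i ∣ ((f i).map (algebraMap K L)) ^ l → ℓ i ≤ l)
    (Cg : Submodule L (Fin n → L))
    (hCg : (Cg : Set (Fin n → L)) = {c : Fin n → L | ∃ P : Polynomial L,
      c = (Polynomial.aeval (M.map (algebraMap K L)) (g * P)).mulVec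
        (fun j => algebraMap K L (v j))}) :
    Module.finrank K
      ↥(Submodule.restrictScalars K Cg ⊓
        LinearMap.range ((Algebra.linearMap K L).compLeft (Fin n)))
      = ∑ i, (m i - ℓ i) * (f i).natDegree := by
  have hfactor : ∀ i, ℓ i ≤ m i ∧ gi i ∣ (f i).map (algebraMap K L) ^ ℓ i ∧
      ∀ R : K[X], gi i ∣ R.map (algebraMap K L) → f i ^ ℓ i ∣ R := fun i => by
    by_cases hgi1 : gi i = 1
    · simp [hgi1, hℓ0 i hgi1]
    obtain ⟨-, hℓm, hdvd, hℓmin⟩ := hℓ1 i hgi1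
    exact ⟨hℓm, hdvd, fun R => pow_dvd_of_dvd_map (hirr i)
      (by rwa [(hgimonic i).isUnit_iff]) (hgi i) hℓmin⟩
  have hsplit : minpoly K M = (∏ i, f i ^ ℓ i) * ∏ i, f i ^ (m i - ℓ i) := by
    rw [hmin, ← Finset.prod_mul_distrib]
    exact Finset.prod_congr rfl fun i _ => by rw [← pow_add, Nat.add_sub_cancel' (hfactor i).1]
  have hgh : g ∣ (∏ i, f i ^ ℓ i).map (algebraMap K L) := by
    rw [hgprod, Polynomial.map_prod]
    exact Finset.prod_dvd_prod_of_dvd _ _ fun i _ => by simpa using (hfactor i).2.1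
  have hhg : ∀ R : K[X], g ∣ R.map (algebraMap K L) → ∏ i, f i ^ ℓ i ∣ R := fun R hR =>
    Finset.prod_dvd_of_coprime (fun i _ j _ hij => IsCoprime.pow <|
        isCoprime_of_irreducible_of_monic (hirr i) (hirr j) (hmonic i) (hmonic j) (hdist.ne hij))
      fun i _ => (hfactor i).2.2 R <|
        (hgprod ▸ Finset.dvd_prod_of_mem gi (Finset.mem_univ i)).trans hR
  have hCg' : Cg = cyclicCode (M.map (algebraMap K L)) (algebraMap K L ∘ v) g :=
    SetLike.ext' (hCg.trans (Set.ext fun _ => mem_cyclicCode.symm))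
  have hinj := LinearMap.compLeft_injective (f := Algebra.linearMap K L)
    (algebraMap K L).injective (Fin n)
  rw [hCg', restrictScalars_cyclicCode_map_inf_range_compLeft hv hgdvd hgh hhg,
    ← (Submodule.equivMapOfInjective _ hinj _).finrank_eq,
    finrank_cyclicCode hv hsplit (monic_prod_of_monic _ _ fun i _ => (hmonic i).pow _),
    natDegree_prod_of_monic _ _ fun i _ => (hmonic i).pow _]
  simp only [natDegree_pow]

/-- For a cyclic matrix `M` over `K` with minimal polynomial `f = f₁^{m₁}⋯f_s^{m_s}`,
and a monic divisor `g = g₁⋯g_s` of `f` in `L[x]` with `gᵢ ∣ fᵢ^{mᵢ}`, setting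
`ℓᵢ = 0` if `gᵢ = 1` and `ℓᵢ = min{ℓ : gᵢ ∣ fᵢ^ℓ}` otherwise, the `K`-dimension of
`C_g ∩ K^n` equals `Σᵢ (mᵢ − ℓᵢ)·deg fᵢ`. -/
theorem stmt7 {K L : Type*} [Field K] [Field L] [Algebra K L] [FiniteDimensional K L]
    {n s : ℕ}
    (M : Matrix (Fin n) (Fin n) K) (v : Fin n → K)
    (hv : Submodule.span K (Set.range fun i : Fin n => (M ^ (i : ℕ)).mulVec v) = ⊤)
    (f : Fin s → Polynomial K) (m : Fin s → ℕ)
    (hmonic : ∀ i, (f i).Monic) (hirr : ∀ i, Irreducible (f i))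
    (hdist : Function.Injective f) (hm : ∀ i, 1 ≤ m i)
    (hmin : minpoly K M = ∏ i, f i ^ m i)
    (g : Polynomial L) (hgmonic : g.Monic)
    (hgdvd : g ∣ (minpoly K M).map (algebraMap K L))
    (gi : Fin s → Polynomial L) (hgimonic : ∀ i, (gi i).Monic)
    (hgprod : g = ∏ i, gi i)
    (hgi : ∀ i, gi i ∣ ((f i).map (algebraMap K L)) ^ m i)
    (ℓ : Fin s → ℕ)
    (hℓ0 : ∀ i, gi i = 1 → ℓ i = 0)
    (hℓ1 : ∀ i, gi i ≠ 1 →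
      1 ≤ ℓ i ∧ ℓ i ≤ m i ∧ gi i ∣ ((f i).map (algebraMap K L)) ^ ℓ i ∧
      ∀ l, 1 ≤ l → gi i ∣ ((f i).map (algebraMap K L)) ^ l → ℓ i ≤ l)
    (Cg : Submodule L (Fin n → L))
    (hCg : (Cg : Set (Fin n → L)) = {c : Fin n → L | ∃ P : Polynomial L,
      c = (Polynomial.aeval (M.map (algebraMap K L)) (g * P)).mulVec
        (fun j => algebraMap K L (v j))}) :
    Module.finrank K
      ↥(Submodule.restrictScalars K Cg ⊓
        LinearMap.range ((Algebra.linearMap K L).compLeft (Fin n)))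
      = ∑ i, (m i - ℓ i) * (f i).natDegree :=
  stmt7_general M v hv f m hmonic hirr hdist hmin g hgdvd gi hgimonic hgprod hgi ℓ hℓ0 hℓ1 Cg hCg
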